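/- If Ω is an infinite set and (M_i)_{i∈I} is a chain of submonoids of Sym(Ω) with ⋃_{i∈I} M_i = Sym(Ω) and |I| ≤ |Ω|, then M_i = Sym(Ω) for some i ∈ I. -/

import Mathlib

/-!
Replacing each `M i` by its group of units `{f | f ∈ M i ∧ f⁻¹ ∈ M i}`, it suffices to treat a
directed family of subgroups `G i`, and we may identify `Ω` with `(I × Bool) × ℤ × Ω`: the fibres
over `(i, false)` are blocks `Ω_i` and the fibres over `(i, true)` form a reserve.

A diagonal argument gives an `i` such that `G i` realises every permutation of `Ω_i` by an element
fixing the reserve. Conjugating such elements by a permutation that moves the other blocks into the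
reserve and taking commutators, some `G j` contains every commutator of permutations supported on
`Ω_i = ℤ × Ω`, hence every permutation supported on the slice `Δ = {0} × Ω` (the commutator of the
shift along `ℤ` with a half-shear). Finally `Δ` is a moiety, and the permutations supported on a
moiety together with a single further permutation generate `Sym(Ω)`; that permutation lies in a
still larger `G k`, which is therefore everything.
-/

open Equiv (Perm)
open Set Cardinal MulAction Pointwise
open scoped commutatorElement

universe u

section Supported

variable {α : Type*}

theorem mem_fixingSubgroup_compl_iff {S : Set α} {σ : Perm α} :
    σ ∈ fixingSubgroup (Perm α) Sᶜ ↔ ∀ x ∉ S, σ x = x := by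
  simp [mem_fixingSubgroup_iff]

theorem apply_mem_iff_of_mem_fixingSubgroup_compl {S : Set α} {σ : Perm α}
    (hσ : σ ∈ fixingSubgroup (Perm α) Sᶜ) {x : α} : σ x ∈ S ↔ x ∈ S := by
  rw [mem_fixingSubgroup_compl_iff] at hσ
  refine ⟨fun h => ?_, fun h => ?_⟩
  · by_contra hx
    rw [hσ x hx] at h
    exact hx h
  · by_contra hx
    rw [σ.injective (hσ _ hx)] at hx
    exact hx h

theorem Equiv.Perm.disjoint_of_mem_fixingSubgroup {s t : Set α} (hst : sᶜ ⊆ t)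
    {f g : Perm α} (hf : f ∈ fixingSubgroup (Perm α) s) (hg : g ∈ fixingSubgroup (Perm α) t) :
    f.Disjoint g := fun x => by
  rw [mem_fixingSubgroup_iff (Perm α)] at hf hg
  by_cases hx : x ∈ s
  · exact Or.inl (hf x hx)
  · exact Or.inr (hg x (hst hx))

theorem Equiv.Perm.exists_image_eq {X Y : Set α} (h : #X = #Y) (hc : #↥Xᶜ = #↥Yᶜ) :
    ∃ g : Perm α, ⇑g '' X = Y := by
  classical
  obtain ⟨e⟩ := Cardinal.eq.1 h
  obtain ⟨f⟩ := Cardinal.eq.1 hc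
  refine ⟨Equiv.subtypeCongr e f, ((Equiv.preimage_eq_iff_eq_image _ _ _).1 ?_).symm⟩
  ext x
  by_cases hx : x ∈ X
  · simp [Equiv.subtypeCongr, hx]
  · have hfx : (f ⟨x, hx⟩ : α) ∉ Y := (f ⟨x, hx⟩).2
    simpa [Equiv.subtypeCongr, hx] using hfx

theorem Cardinal.mk_preimage_val (S X : Set α) : #↥((↑) ⁻¹' X : Set S) = #↥(S ∩ X) := by
  rw [← Subtype.image_preimage_coe, mk_image_eq Subtype.val_injective]

theorem exists_mem_fixingSubgroup_compl_image_eq {S X Y : Set α} (hout : X \ S = Y \ S)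
    (hin : #↥(X ∩ S) = #↥(Y ∩ S)) (hrest : #↥(S \ X) = #↥(S \ Y)) :
    ∃ π ∈ fixingSubgroup (Perm α) Sᶜ, ⇑π '' X = Y := by
  classical
  obtain ⟨g, hg⟩ :=
    Perm.exists_image_eq (X := (Subtype.val ⁻¹' X : Set S)) (Y := Subtype.val ⁻¹' Y)
      (by simpa only [mk_preimage_val, inter_comm S] using hin)
      (by simpa only [← preimage_compl, mk_preimage_val, sdiff_eq] using hrest)
  have hg' : ∀ x : S, (g x : α) ∈ Y ↔ (x : α) ∈ X := fun x => by
    rw [← Set.mem_preimage (f := Subtype.val), ← hg]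
    exact g.injective.mem_set_image
  refine ⟨Perm.ofSubtype g, mem_fixingSubgroup_compl_iff.2 fun x hx =>
    Perm.ofSubtype_apply_of_not_mem g hx, ((Equiv.preimage_eq_iff_eq_image _ _ _).1 ?_).symm⟩
  ext x
  by_cases hx : x ∈ S
  · simpa [Perm.ofSubtype_apply_of_mem g hx] using hg' ⟨x, hx⟩
  · simpa [Perm.ofSubtype_apply_of_not_mem g hx, hx] using (congrArg (x ∈ ·) hout).symm

theorem mem_sup_fixingSubgroup_compl_of_image_eq {A B : Set α} (hAB : A ∪ B = Set.univ)
    {φ : Perm α} (hφ : ⇑φ '' B = B) :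
    φ ∈ fixingSubgroup (Perm α) Aᶜ ⊔ fixingSubgroup (Perm α) Bᶜ := by
  classical
  have hφB : ∀ x, φ x ∈ B ↔ x ∈ B := fun x => by
    conv_lhs => rw [← hφ]
    exact φ.injective.mem_set_image
  set p := Perm.ofSubtype (φ.subtypePerm hφB)
  have hp : p ∈ fixingSubgroup (Perm α) Bᶜ :=
    mem_fixingSubgroup_compl_iff.2 fun x hx => Perm.ofSubtype_apply_of_not_mem _ hx
  have hq : p⁻¹ * φ ∈ fixingSubgroup (Perm α) Aᶜ := by
    refine mem_fixingSubgroup_compl_iff.2 fun x hx => ?_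
    rw [Perm.mul_apply, Perm.inv_eq_iff_eq]
    simp [p, Perm.ofSubtype_apply_of_mem _ (compl_subset_iff_union.2 hAB hx)]
  simpa [sup_comm] using Subgroup.mul_mem_sup hp hq

end Supported

section Moieties

variable {α : Type*}

def IsMoiety (X : Set α) : Prop := #X = #α ∧ #↥Xᶜ = #α

def SplitsLarge (X S : Set α) : Prop := #↥(X ∩ S) = #α ∧ #↥(S \ X) = #α

theorem Cardinal.mk_eq_of_subset {X Y : Set α} (h : X ⊆ Y) (hX : #X = #α) : #Y = #α :=
  (mk_set_le Y).antisymm (hX ▸ mk_le_mk_of_subset h)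

theorem Cardinal.mk_lt_of_subset_union [Infinite α] {Z U V : Set α} (h : Z ⊆ U ∪ V)
    (hU : #U < #α) (hV : #V < #α) : #Z < #α :=
  ((mk_le_mk_of_subset h).trans (mk_union_le U V)).trans_lt
    (add_lt_of_lt (aleph0_le_mk α) hU hV)

theorem exists_isMoiety (β : Type*) [Infinite β] : ∃ s : Set β, IsMoiety s := by
  obtain ⟨e⟩ : Nonempty (β ≃ β ⊕ β) := Cardinal.eq.1 (by simp [add_eq_self (aleph0_le_mk β)])
  refine ⟨e ⁻¹' range Sum.inl, ?_, ?_⟩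
  · rw [mk_preimage_equiv, mk_range_eq _ Sum.inl_injective]
  · rw [← preimage_compl, compl_range_inl, mk_preimage_equiv, mk_range_eq _ Sum.inr_injective]

theorem exists_subset_mk_eq_mk_diff_eq [Infinite α] {D : Set α} (hD : #D = #α) :
    ∃ Q ⊆ D, #Q = #α ∧ #↥(D \ Q) = #α := by
  have : Infinite D := Cardinal.infinite_iff.2 (hD ▸ aleph0_le_mk α)
  obtain ⟨s, hs, hsc⟩ := exists_isMoiety D
  refine ⟨(↑) '' s, Subtype.coe_image_subset D s, ?_, ?_⟩
  · rw [mk_image_eq Subtype.val_injective, hs, hD]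
  · rw [← image_val_compl, mk_image_eq Subtype.val_injective, hsc, hD]

theorem IsMoiety.splitsLarge_or [Infinite α] {A B X : Set α} (hX : IsMoiety X)
    (hAB : A ∪ B = Set.univ) (hD : #↥(A ∩ B) = #α) : SplitsLarge X A ∨ SplitsLarge X B := by
  have hlt : ∀ Z : Set α, #Z ≠ #α → #Z < #α := fun Z h => (mk_set_le Z).lt_of_ne h
  have hcover : ∀ x, x ∈ A ∨ x ∈ B := fun x => by simpa using congrArg (x ∈ ·) hAB
  by_contra! h
  simp only [SplitsLarge, not_and_or] at h
  obtain ⟨h₁ | h₁, h₂ | h₂⟩ := h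
  · refine hX.1.not_lt (mk_lt_of_subset_union (fun x hx => ?_) (hlt _ h₁) (hlt _ h₂))
    grind
  · refine hD.not_lt (mk_lt_of_subset_union (fun x hx => ?_) (hlt _ h₁) (hlt _ h₂))
    grind
  · refine hD.not_lt (mk_lt_of_subset_union (fun x hx => ?_) (hlt _ h₂) (hlt _ h₁))
    grind
  · refine hX.2.not_lt (mk_lt_of_subset_union (fun x hx => ?_) (hlt _ h₁) (hlt _ h₂))
    grind

theorem mem_orbit_of_splitsLarge {G : Subgroup (Perm α)} {S X Y : Set α}
    (hS : fixingSubgroup (Perm α) Sᶜ ≤ G) (hout : X \ S = Y \ S) (hX : SplitsLarge X S)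
    (hY : SplitsLarge Y S) : Y ∈ orbit G X := by
  obtain ⟨π, hπ, hπX⟩ := exists_mem_fixingSubgroup_compl_image_eq hout (hX.1.trans hY.1.symm)
    (hX.2.trans hY.2.symm)
  simp only [mem_orbit_iff, ← Set.image_smul]
  exact ⟨⟨π, hS hπ⟩, hπX⟩

theorem orbit_eq_orbit_compl_union {G : Subgroup (Perm α)} {S T Q X : Set α}
    (hS : fixingSubgroup (Perm α) Sᶜ ≤ G) (hT : fixingSubgroup (Perm α) Tᶜ ≤ G)
    (hST : S ∪ T = Set.univ) (hQ : Q ⊆ S ∩ T) (hQα : #Q = #α) (hQc : #↥((S ∩ T) \ Q) = #α)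
    (hX : SplitsLarge X S) : orbit G X = orbit G (Sᶜ ∪ Q) := by
  have hSc : Sᶜ ⊆ T := compl_subset_iff_union.2 hST
  have hQS : Q ⊆ S := fun x hx => (hQ hx).1
  have hQT : Q ⊆ T := fun x hx => (hQ hx).2
  have h₁ : (X \ S) ∪ Q ∈ orbit G X := by
    refine mem_orbit_of_splitsLarge hS ?_ hX
      ⟨mk_eq_of_subset (fun x hx => ⟨Or.inr hx, hQS hx⟩) hQα,
        mk_eq_of_subset (fun x hx => ?_) hQc⟩
    · ext x; have := @hQS x; simp only [mem_sdiff, mem_union]; tauto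
    · simp only [mem_sdiff, mem_inter_iff, mem_union] at hx ⊢; tauto
  have h₂ : Sᶜ ∪ Q ∈ orbit G ((X \ S) ∪ Q) := by
    refine mem_orbit_of_splitsLarge hT ?_
      ⟨mk_eq_of_subset (fun x hx => ⟨Or.inr hx, hQT hx⟩) hQα,
        mk_eq_of_subset (fun x hx => ?_) hQc⟩
      ⟨mk_eq_of_subset (fun x hx => ⟨Or.inr hx, hQT hx⟩) hQα,
        mk_eq_of_subset (fun x hx => ?_) hQc⟩
    · ext x; have := @hSc x; have := @hQT x
      simp only [mem_sdiff, mem_union, mem_compl_iff] at *; tauto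
    · simp only [mem_sdiff, mem_inter_iff, mem_union] at hx ⊢; tauto
    · simp only [mem_sdiff, mem_inter_iff, mem_union, mem_compl_iff] at hx ⊢; tauto
  rw [orbit_eq_iff.2 h₂, orbit_eq_iff.2 h₁]

/-- Every moiety lies in the orbit of `B` under the group generated by the two subgroups, so any
permutation can be corrected by an element of it to stabilise `B`; a permutation stabilising `B`
is a product of permutations supported on `B` and on `Bᶜ ⊆ A`. -/
theorem sup_fixingSubgroup_compl_eq_top [Infinite α] {A B : Set α} (hAB : A ∪ B = Set.univ)
    (hD : #↥(A ∩ B) = #α) (hB : #↥Bᶜ = #α) :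
    fixingSubgroup (Perm α) Aᶜ ⊔ fixingSubgroup (Perm α) Bᶜ = ⊤ := by
  set G := fixingSubgroup (Perm α) Aᶜ ⊔ fixingSubgroup (Perm α) Bᶜ
  have hAG : fixingSubgroup (Perm α) Aᶜ ≤ G := le_sup_left
  have hBG : fixingSubgroup (Perm α) Bᶜ ≤ G := le_sup_right
  have hBA : B ∪ A = Set.univ := by rw [union_comm, hAB]
  obtain ⟨Q, hQ, hQα, hQc⟩ := exists_subset_mk_eq_mk_diff_eq hD
  have hQ' : Q ⊆ B ∩ A := inter_comm A B ▸ hQ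
  have hQc' : #↥((B ∩ A) \ Q) = #α := inter_comm A B ▸ hQc
  have hB_A : orbit G B = orbit G (Aᶜ ∪ Q) :=
    orbit_eq_orbit_compl_union hAG hBG hAB hQ hQα hQc
      ⟨by rwa [inter_comm],
        by rwa [sdiff_eq_compl_inter, inter_eq_left.2 (compl_subset_iff_union.2 hBA)]⟩
  have hA_B : orbit G (Aᶜ ∪ Q) = orbit G (Bᶜ ∪ Q) :=
    orbit_eq_orbit_compl_union hBG hAG hBA hQ' hQα hQc'
      ⟨mk_eq_of_subset (fun x hx => ⟨Or.inr hx, (hQ hx).2⟩) hQα,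
        mk_eq_of_subset (fun x hx => ⟨hx.1.2, by simp_all⟩) hQc⟩
  have horbit : ∀ X, IsMoiety X → orbit G X = orbit G B := by
    intro X hX
    rcases hX.splitsLarge_or hAB hD with h | h
    · rw [hB_A, orbit_eq_orbit_compl_union hAG hBG hAB hQ hQα hQc h]
    · rw [hB_A, hA_B, orbit_eq_orbit_compl_union hBG hAG hBA hQ' hQα hQc' h]
  refine eq_top_iff.2 fun g _ => ?_
  have hgB : IsMoiety (⇑g '' B) := by
    refine ⟨?_, ?_⟩
    · rw [mk_image_eq g.injective]
      exact mk_eq_of_subset inter_subset_right hD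
    · rwa [← image_compl_eq g.bijective, mk_image_eq g.injective]
  obtain ⟨⟨h, hG⟩, hh⟩ := mem_orbit_iff.1 (orbit_eq_iff.1 (horbit _ hgB))
  replace hh : ⇑h '' B = ⇑g '' B := hh
  have hhg : ⇑(h⁻¹ * g) '' B = B := by
    rw [Perm.coe_mul, image_comp, ← hh, ← image_comp, ← Perm.coe_mul,
      inv_mul_cancel, Perm.coe_one, image_id]
  simpa using mul_mem hG (mem_sup_fixingSubgroup_compl_of_image_eq hAB hhg)

/-- `u` maps `A` onto `B = Pᶜ` for a half `P` of `A`, so conjugation by `u` supplies the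
permutations supported on `B`. -/
theorem exists_sup_zpowers_eq_top [Infinite α] {A : Set α} (hA : IsMoiety A) :
    ∃ u : Perm α, fixingSubgroup (Perm α) Aᶜ ⊔ Subgroup.zpowers u = ⊤ := by
  obtain ⟨P, hPA, hP, hAP⟩ := exists_subset_mk_eq_mk_diff_eq hA.1
  obtain ⟨u, hu⟩ := Perm.exists_image_eq (X := A) (Y := Pᶜ)
    (hA.1.trans (mk_eq_of_subset (compl_subset_compl.2 hPA) hA.2).symm)
    (by rw [compl_compl, hA.2, hP])
  refine ⟨u, top_unique ?_⟩
  have hAB : A ∪ Pᶜ = Set.univ := compl_subset_iff_union.1 (compl_subset_compl.2 hPA)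
  rw [← sup_fixingSubgroup_compl_eq_top hAB (by rwa [← Set.sdiff_eq]) (by rwa [compl_compl])]
  refine sup_le le_sup_left fun τ hτ => ?_
  have hconj : u⁻¹ * τ * u ∈ fixingSubgroup (Perm α) Aᶜ := by
    refine mem_fixingSubgroup_compl_iff.2 fun x hx => ?_
    have hux : u x ∉ Pᶜ := by rw [← hu]; exact u.injective.mem_set_image.not.2 hx
    simp [mem_fixingSubgroup_compl_iff.1 hτ _ hux]
  have hu' : u ∈ fixingSubgroup (Perm α) Aᶜ ⊔ Subgroup.zpowers u :=
    le_sup_right (a := fixingSubgroup (Perm α) Aᶜ) (Subgroup.mem_zpowers u)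
  simpa [mul_assoc] using
    mul_mem (mul_mem hu' (le_sup_left (b := Subgroup.zpowers u) hconj)) (inv_mem hu')

end Moieties

section Commutators

variable {α : Type*}

theorem commutatorElement_mul_mul_of_commute {G : Type*} [Group G] {σ ρ a b : G}
    (haρ : Commute a ρ) (hab : Commute a b) (hbσ : Commute b σ) : ⁅σ * a, ρ * b⁆ = ⁅σ, ρ⁆ :=
  calc σ * a * (ρ * b) * (σ * a)⁻¹ * (ρ * b)⁻¹
      = σ * (a * ρ) * b * a⁻¹ * σ⁻¹ * b⁻¹ * ρ⁻¹ := by group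
    _ = σ * ρ * (a * b * a⁻¹) * σ⁻¹ * b⁻¹ * ρ⁻¹ := by rw [haρ.eq]; group
    _ = σ * ρ * (b * σ⁻¹) * b⁻¹ * ρ⁻¹ := by rw [hab.eq, mul_inv_cancel_right]; group
    _ = σ * ρ * σ⁻¹ * ρ⁻¹ := by rw [hbσ.inv_right.eq]; group

/-- `v g v⁻¹` agrees with `σ` on `S` and fixes `(S ∪ T)ᶜ`, while `h` agrees with `ρ` on `S` and
fixes `T`; what remains of them beyond `σ` and `ρ` has disjoint supports, so it cancels from the
commutator. -/
theorem commutatorElement_mem_of_eqOn {G : Subgroup (Perm α)} {S T : Set α} {v : Perm α}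
    (hv : v ∈ G) (hvS : ∀ x ∈ S, v x = x) (hvT : (S ∪ T)ᶜ ⊆ ⇑v '' T) {σ ρ g h : Perm α}
    (hσ : σ ∈ fixingSubgroup (Perm α) Sᶜ) (hρ : ρ ∈ fixingSubgroup (Perm α) Sᶜ)
    (hg : g ∈ G) (hgS : EqOn g σ S) (hgT : ∀ x ∈ T, g x = x)
    (hh : h ∈ G) (hhS : EqOn h ρ S) (hhT : ∀ x ∈ T, h x = x) : ⁅σ, ρ⁆ ∈ G := by
  have ha : σ⁻¹ * (v * g * v⁻¹) ∈ fixingSubgroup (Perm α) (S ∪ (S ∪ T)ᶜ) := by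
    refine (mem_fixingSubgroup_iff (Perm α)).2 fun x hx => ?_
    simp only [Perm.smul_def, Perm.mul_apply, Perm.inv_eq_iff_eq]
    rcases hx with hx | hx
    · rw [(Perm.inv_eq_iff_eq).2 (hvS x hx).symm, hgS hx,
        hvS _ ((apply_mem_iff_of_mem_fixingSubgroup_compl hσ).2 hx)]
    · obtain ⟨t, ht, rfl⟩ := hvT hx
      have hvt : v t ∉ S := fun h => hx (Or.inl h)
      simp [hgT t ht, mem_fixingSubgroup_compl_iff.1 hσ _ hvt]
  have hb : ρ⁻¹ * h ∈ fixingSubgroup (Perm α) (S ∪ T) := by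
    refine (mem_fixingSubgroup_iff (Perm α)).2 fun x hx => ?_
    simp only [Perm.smul_def, Perm.mul_apply, Perm.inv_eq_iff_eq]
    by_cases hxS : x ∈ S
    · exact hhS hxS
    · rw [hhT x (hx.resolve_left hxS), mem_fixingSubgroup_compl_iff.1 hρ x hxS]
  have hcomm : ⁅σ * (σ⁻¹ * (v * g * v⁻¹)), ρ * (ρ⁻¹ * h)⁆ = ⁅σ, ρ⁆ :=
    commutatorElement_mul_mul_of_commute
      (Perm.disjoint_of_mem_fixingSubgroup (fun _ hx h => hx (Or.inl h)) ha hρ).commute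
      (Perm.disjoint_of_mem_fixingSubgroup (fun _ hx => by_contra fun h => hx (Or.inr h))
        ha hb).commute
      (Perm.disjoint_of_mem_fixingSubgroup (fun _ hx h => hx (Or.inl h)) hb hσ).commute
  rw [← hcomm, mul_inv_cancel_left, mul_inv_cancel_left, commutatorElement_def]
  have hvgv : v * g * v⁻¹ ∈ G := mul_mem (mul_mem hv hg) (inv_mem hv)
  exact mul_mem (mul_mem (mul_mem hvgv hh) (inv_mem hvgv)) (inv_mem hh)

end Commutators

section Fibres

variable {K Y : Type*} [DecidableEq K]

def Equiv.Perm.prodExtendRightHom (k : K) : Perm Y →* Perm (K × Y) where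
  toFun := prodExtendRight k
  map_one' := by
    ext ⟨k', y⟩ : 1
    by_cases hk : k' = k
    · subst hk; simp
    · simp [prodExtendRight_apply_ne _ hk]
  map_mul' s t := by
    ext ⟨k', y⟩ : 1
    by_cases hk : k' = k
    · subst hk; simp
    · simp [prodExtendRight_apply_ne _ hk]

theorem Equiv.Perm.prodExtendRight_mem_fixingSubgroup (k : K) (s : Perm Y) :
    prodExtendRight k s ∈ fixingSubgroup (Perm (K × Y)) {x : K × Y | x.1 = k}ᶜ :=
  mem_fixingSubgroup_compl_iff.2 fun x hx => prodExtendRight_apply_ne s hx x.2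

theorem Equiv.Perm.exists_prodExtendRight_eq {k : K} {τ : Perm (K × Y)}
    (hτ : τ ∈ fixingSubgroup (Perm (K × Y)) {x : K × Y | x.1 = k}ᶜ) :
    ∃ τ' : Perm Y, prodExtendRight k τ' = τ := by
  have hfst : ∀ σ ∈ fixingSubgroup (Perm (K × Y)) {x : K × Y | x.1 = k}ᶜ, ∀ y,
      σ (k, y) = (k, (σ (k, y)).2) := fun σ hσ y =>
    Prod.ext ((apply_mem_iff_of_mem_fixingSubgroup_compl hσ).2 rfl) rfl
  refine ⟨⟨fun y => (τ (k, y)).2, fun y => (τ⁻¹ (k, y)).2, fun y => ?_, fun y => ?_⟩, ?_⟩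
  · simp only [← hfst τ hτ]
    simp
  · simp only [← hfst τ⁻¹ (inv_mem hτ)]
    simp
  · ext ⟨k', y⟩ : 1
    by_cases hk : k' = k
    · subst hk
      exact (prodExtendRight_apply_eq _ _ y).trans (hfst τ hτ y).symm
    · rw [prodExtendRight_apply_ne _ hk, mem_fixingSubgroup_compl_iff.1 hτ _ hk]

theorem commutatorElement_prodCongrRight_prodCongrLeft {β : Type*} (π : Perm β) :
    ⁅(Equiv.prodCongrRight fun n : ℤ => if 0 ≤ n then π else 1 : Perm (ℤ × β)),
      (Equiv.prodCongrLeft fun _ => Equiv.addRight (1 : ℤ) : Perm (ℤ × β))⁆ =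
      Perm.prodExtendRight 0 π := by
  ext ⟨n, b⟩ : 1
  simp only [commutatorElement_def, Perm.mul_apply]
  rcases lt_trichotomy n 0 with hn | rfl | hn
  · simp [Perm.prodExtendRight_apply_ne _ hn.ne, hn.not_ge, (hn.trans zero_lt_one).not_ge]
  · simp [Perm.one_def]
  · simp [Perm.prodExtendRight_apply_ne _ hn.ne', hn.le, show (1 : ℤ) ≤ n by omega]

theorem fixingSubgroup_compl_le_of_commutatorElement_mem {F : Type*}
    {H : Subgroup (Perm (K × ℤ × F))} {k : K}
    (h : ∀ s t : Perm (ℤ × F), ⁅Perm.prodExtendRight k s, Perm.prodExtendRight k t⁆ ∈ H) :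
    fixingSubgroup (Perm (K × ℤ × F)) {x : K × ℤ × F | x.1 = k ∧ x.2.1 = 0}ᶜ ≤ H := by
  intro τ hτ
  obtain ⟨τ', rfl⟩ := Perm.exists_prodExtendRight_eq
    (fixingSubgroup_antitone _ _ (compl_subset_compl.2 fun x hx => hx.1) hτ)
  have hτ' : τ' ∈ fixingSubgroup (Perm (ℤ × F)) {y : ℤ × F | y.1 = 0}ᶜ :=
    mem_fixingSubgroup_compl_iff.2 fun y hy => by
      simpa using mem_fixingSubgroup_compl_iff.1 hτ (k, y) fun h => hy h.2
  obtain ⟨π, rfl⟩ := Perm.exists_prodExtendRight_eq hτ'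
  rw [← commutatorElement_prodCongrRight_prodCongrLeft]
  change Perm.prodExtendRightHom k _ ∈ _
  rw [map_commutatorElement]
  exact h _ _

end Fibres

section Blocks

variable {I Y : Type*}

def ExtendsBlockPerms (H : Subgroup (Perm ((I × Bool) × Y))) (i : I) : Prop :=
  ∀ π : Perm Y, ∃ g ∈ H,
    (∀ y, g ((i, false), y) = ((i, false), π y)) ∧ ∀ j y, g ((j, true), y) = ((j, true), y)

theorem ExtendsBlockPerms.mono {H H' : Subgroup (Perm ((I × Bool) × Y))} {i : I}
    (h : ExtendsBlockPerms H i) (hHH' : H ≤ H') : ExtendsBlockPerms H' i :=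
  fun π => (h π).imp fun _ hg => ⟨hHH' hg.1, hg.2⟩

/-- Otherwise pick for every `i` a permutation `π i` witnessing the failure; the permutation acting
by `π i` on each block `(i, false)` lies in no `G i`. -/
theorem exists_extendsBlockPerms (G : I → Subgroup (Perm ((I × Bool) × Y)))
    (hcover : ∀ f, ∃ i, f ∈ G i) : ∃ i, ExtendsBlockPerms (G i) i := by
  by_contra! h
  choose π hπ using fun i => not_forall.1 (h i)
  obtain ⟨i, hi⟩ := hcover (Equiv.prodCongrRight fun k => if k.2 then 1 else π k.1)
  exact hπ i ⟨_, hi, fun y => by simp, fun j y => by simp⟩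

def blockSwap [DecidableEq I] (i : I) : Perm ((I × Bool) × Y) :=
  (Equiv.prodCongrRight fun j => if j = i then 1 else Equiv.boolNot).prodCongr (Equiv.refl Y)

theorem commutatorElement_prodExtendRight_mem [DecidableEq I] {H : Subgroup (Perm ((I × Bool) × Y))}
    {i : I} (hswap : blockSwap i ∈ H) (hext : ExtendsBlockPerms H i) (s t : Perm Y) :
    ⁅Perm.prodExtendRight (i, false) s, Perm.prodExtendRight (i, false) t⁆ ∈ H := by
  obtain ⟨g, hg, hgS, hgT⟩ := hext s
  obtain ⟨h, hh, hhS, hhT⟩ := hext t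
  refine commutatorElement_mem_of_eqOn (S := {x | x.1 = (i, false)}) (T := {x | x.1.2 = true})
    hswap ?_ ?_ (Perm.prodExtendRight_mem_fixingSubgroup _ s)
    (Perm.prodExtendRight_mem_fixingSubgroup _ t) hg ?_ ?_ hh ?_ ?_
  · rintro ⟨k, y⟩ (rfl : k = (i, false))
    simp [blockSwap]
  · rintro ⟨⟨j, b⟩, y⟩ hx
    simp only [mem_compl_iff, mem_union, mem_ofPred_eq, Prod.mk.injEq, not_or,
      Bool.not_eq_true] at hx
    obtain ⟨hj, rfl⟩ : j ≠ i ∧ b = false := ⟨fun h => hx.1 ⟨h, hx.2⟩, hx.2⟩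
    exact ⟨((j, true), y), rfl, by simp [blockSwap, hj]⟩
  · rintro ⟨k, y⟩ (rfl : k = (i, false))
    rw [hgS, Perm.prodExtendRight_apply_eq]
  · rintro ⟨⟨j, b⟩, y⟩ (rfl : b = true)
    exact hgT j y
  · rintro ⟨k, y⟩ (rfl : k = (i, false))
    rw [hhS, Perm.prodExtendRight_apply_eq]
  · rintro ⟨⟨j, b⟩, y⟩ (rfl : b = true)
    exact hhT j y

theorem mk_blocks {I F : Type u} [Nonempty I] [Infinite F] (h : #I ≤ #F) :
    #((I × Bool) × ℤ × F) = #F := by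
  have hF := aleph0_le_mk F
  simp only [mk_prod, lift_id, lift_uzero, mk_int, lift_aleph0, mk_fintype, Fintype.card_bool,
    Nat.cast_ofNat, lift_ofNat, aleph0_mul_eq hF]
  refine Cardinal.mul_eq_right hF ?_ (mul_ne_zero (mk_ne_zero I) two_ne_zero)
  calc #I * 2 ≤ #F * #F := mul_le_mul' h ((natCast_lt_aleph0 (n := 2)).le.trans hF)
    _ = #F := mul_eq_self hF

theorem isMoiety_block_slice {I F : Type u} [Infinite F] (h : #I ≤ #F) (i : I) :
    IsMoiety {x : (I × Bool) × ℤ × F | x.1 = (i, false) ∧ x.2.1 = 0} := by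
  have : Nonempty I := ⟨i⟩
  have hrange : {x : (I × Bool) × ℤ × F | x.1 = (i, false) ∧ x.2.1 = 0} =
      range fun f : F => ((i, false), ((0 : ℤ), f)) := by
    ext ⟨k, n, f⟩
    simp [eq_comm, and_comm]
  refine ⟨?_, mk_eq_of_subset (X := range fun f : F => ((i, true), ((0 : ℤ), f))) ?_ ?_⟩
  · rw [mk_blocks h, hrange, mk_range_eq _ fun f f' h => by simpa using h]
  · rintro _ ⟨f, rfl⟩ ⟨h, -⟩
    simp at h
  · rw [mk_blocks h, mk_range_eq _ fun f f' h => by simpa using h]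

theorem exists_eq_top_of_directed_blocks {I F : Type u} [Infinite F] (hIF : #I ≤ #F)
    (G : I → Subgroup (Perm ((I × Bool) × ℤ × F))) (hdir : Directed (· ≤ ·) G)
    (hcover : ∀ f, ∃ i, f ∈ G i) : ∃ i, G i = ⊤ := by
  classical
  have hup : ∀ i f, ∃ j, G i ≤ G j ∧ f ∈ G j := fun i f => by
    obtain ⟨a, ha⟩ := hcover f
    obtain ⟨j, hij, haj⟩ := hdir i a
    exact ⟨j, hij, haj ha⟩
  obtain ⟨i₁, hext⟩ := exists_extendsBlockPerms G hcover
  have : Nonempty I := ⟨i₁⟩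
  obtain ⟨i₂, h₁₂, hswap⟩ := hup i₁ (blockSwap i₁)
  have hΔ := fixingSubgroup_compl_le_of_commutatorElement_mem
    (commutatorElement_prodExtendRight_mem hswap (hext.mono h₁₂))
  obtain ⟨u, hu⟩ := exists_sup_zpowers_eq_top (isMoiety_block_slice hIF i₁)
  obtain ⟨i₃, h₂₃, hu₃⟩ := hup i₂ u
  exact ⟨i₃, top_unique (hu ▸ sup_le (hΔ.trans h₂₃) (Subgroup.zpowers_le.2 hu₃))⟩

end Blocks

theorem Equiv.Perm.exists_subgroup_eq_top_of_directed {Ω I : Type u} [Infinite Ω]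
    (hI : #I ≤ #Ω) (G : I → Subgroup (Perm Ω)) (hdir : Directed (· ≤ ·) G)
    (hcover : ∀ f, ∃ i, f ∈ G i) : ∃ i, G i = ⊤ := by
  obtain ⟨i₀, -⟩ := hcover 1
  have : Nonempty I := ⟨i₀⟩
  obtain ⟨e⟩ := Cardinal.eq.1 (mk_blocks (F := Ω) hI)
  let φ := e.permCongrHom.toMonoidHom
  obtain ⟨i, hi⟩ := exists_eq_top_of_directed_blocks hI (fun i => (G i).comap φ)
    (fun i j => (hdir i j).imp fun _ hk => ⟨Subgroup.comap_mono hk.1, Subgroup.comap_mono hk.2⟩)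
    (fun f => hcover (φ f))
  refine ⟨i, eq_top_iff.2 fun f _ => ?_⟩
  have : e.permCongrHom.symm f ∈ (G i).comap φ := hi ▸ Subgroup.mem_top _
  rwa [Subgroup.mem_comap, MulEquiv.coe_toMonoidHom, MulEquiv.apply_symm_apply] at this

theorem stmt5 {Ω : Type u} [Infinite Ω] {I : Type u} (M : I → Submonoid (Equiv.Perm Ω))
    (hchain : ∀ i j, M i ≤ M j ∨ M j ≤ M i)
    (hcard : Cardinal.mk I ≤ Cardinal.mk Ω)
    (hcover : ∀ f : Equiv.Perm Ω, ∃ i, f ∈ M i) :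
    ∃ i : I, M i = ⊤ := by
  have hdir : Directed (· ≤ ·) M := fun i j =>
    (hchain i j).elim (fun h => ⟨j, h, le_rfl⟩) fun h => ⟨i, le_rfl, h⟩
  let H : I → Subgroup (Perm Ω) := fun i => (M i).units.comap toUnits.toMonoidHom
  have hH : ∀ i f, f ∈ H i ↔ f ∈ M i ∧ f⁻¹ ∈ M i := fun i f => Submonoid.mem_units_iff _ _
  obtain ⟨i, hi⟩ := Perm.exists_subgroup_eq_top_of_directed hcard H
    (fun i j => (hdir i j).imp fun _ hk =>
      ⟨Subgroup.comap_mono (Submonoid.units_mono hk.1),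
        Subgroup.comap_mono (Submonoid.units_mono hk.2)⟩)
    (fun f => by
      obtain ⟨a, ha⟩ := hcover f
      obtain ⟨b, hb⟩ := hcover f⁻¹
      obtain ⟨c, hac, hbc⟩ := hdir a b
      exact ⟨c, (hH c f).2 ⟨hac ha, hbc hb⟩⟩)
  exact ⟨i, eq_top_iff.2 fun f _ => ((hH i f).1 (hi ▸ Subgroup.mem_top f)).1⟩
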